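/- Define the operators N_{ij} v = x_i ∂v/∂x_j, K_{ij} v = x_i ∂v/∂x_j − x_j ∂v/∂x_i, and A_{ij} v = x_i ∂v/∂x_i − x_j ∂v/∂x_j on smooth functions of ℝᵈ \ {0}. Then for every smooth v homogeneous of degree ℓ, ∑_{i≠j} N_{ij}² v = ∑_{i<j} K_{ij}² v + (d−1)ℓ·v + ((d−1)/d)·ℓ²·v − (1/d) ∑_{i<j} A_{ij}² v. -/

import Mathlib

/-- The partial derivative `∂f/∂x_j` at `x`. -/
noncomputable def pderiv' {d : ℕ} (f : (Fin d → ℝ) → ℝ) (j : Fin d) (x : Fin d → ℝ) : ℝ :=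
  fderiv ℝ f x (Pi.single j 1)

/-- `N_{ij} f = x_i ∂f/∂x_j`. -/
noncomputable def Nop {d : ℕ} (i j : Fin d) (f : (Fin d → ℝ) → ℝ) : (Fin d → ℝ) → ℝ :=
  fun x => x i * pderiv' f j x

/-- `K_{ij} f = x_i ∂f/∂x_j − x_j ∂f/∂x_i`. -/
noncomputable def Kop {d : ℕ} (i j : Fin d) (f : (Fin d → ℝ) → ℝ) : (Fin d → ℝ) → ℝ :=
  fun x => x i * pderiv' f j x - x j * pderiv' f i x

/-- `A_{ij} f = x_i ∂f/∂x_i − x_j ∂f/∂x_j`. -/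
noncomputable def Aop {d : ℕ} (i j : Fin d) (f : (Fin d → ℝ) → ℝ) : (Fin d → ℝ) → ℝ :=
  fun x => x i * pderiv' f i x - x j * pderiv' f j x

lemma euler_ray {d : ℕ} {f : (Fin d → ℝ) → ℝ} {c : ℝ} {x : Fin d → ℝ}
    (hf : DifferentiableAt ℝ f x)
    (hhom : ∀ r : ℝ, 0 < r → f (r • x) = r ^ c * f x) :
    fderiv ℝ f x x = c * f x := by
  have hs : HasDerivAt (fun r : ℝ => r • x) x 1 := by
    simpa using (hasDerivAt_id (1:ℝ)).smul_const x
  have h1 : HasDerivAt (fun r : ℝ => f (r • x)) (fderiv ℝ f x x) 1 := by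
    have hf' : HasFDerivAt f (fderiv ℝ f x) ((1:ℝ) • x) := by
      rw [one_smul]; exact hf.hasFDerivAt
    exact hf'.comp_hasDerivAt (1:ℝ) hs
  have h2 : HasDerivAt (fun r : ℝ => r ^ c * f x) (c * f x) 1 := by
    have := (Real.hasDerivAt_rpow_const (x := (1:ℝ)) (p := c)
      (Or.inl one_ne_zero)).mul_const (f x)
    simpa using this
  have heq : (fun r : ℝ => f (r • x)) =ᶠ[nhds 1] (fun r : ℝ => r ^ c * f x) := by
    filter_upwards [eventually_gt_nhds (zero_lt_one)] with r hr
    exact hhom r hr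
  exact (h1.congr_of_eventuallyEq heq.symm).unique h2

lemma euler_sum {d : ℕ} {f : (Fin d → ℝ) → ℝ} {c : ℝ} {x : Fin d → ℝ}
    (hf : DifferentiableAt ℝ f x)
    (hhom : ∀ r : ℝ, 0 < r → f (r • x) = r ^ c * f x) :
    ∑ i, x i * pderiv' f i x = c * f x := by
  have hx : x = ∑ i, x i • (Pi.single i 1 : Fin d → ℝ) := by
    simp_rw [← Pi.single_smul, smul_eq_mul, mul_one]
    exact (Finset.univ_sum_single x).symm
  calc ∑ i, x i * pderiv' f i x
      = fderiv ℝ f x (∑ i, x i • (Pi.single i 1 : Fin d → ℝ)) := by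
        rw [map_sum]; simp [pderiv']
    _ = fderiv ℝ f x x := by rw [← hx]
    _ = c * f x := euler_ray hf hhom

lemma pderiv_hom {d : ℕ} {ℓ : ℝ} {v : (Fin d → ℝ) → ℝ}
    (hD : ∀ y : Fin d → ℝ, y ≠ 0 → DifferentiableAt ℝ v y)
    (hom : ∀ r : ℝ, 0 < r → ∀ y : Fin d → ℝ, y ≠ 0 → v (r • y) = r ^ ℓ * v y)
    {x : Fin d → ℝ} (hx : x ≠ 0) (j : Fin d) (r : ℝ) (hr : 0 < r) :
    pderiv' v j (r • x) = r ^ (ℓ - 1) * pderiv' v j x := by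
  have hrx : r • x ≠ 0 := smul_ne_zero (ne_of_gt hr) hx
  have hU : IsOpen {y : Fin d → ℝ | y ≠ 0} := isOpen_ne
  have heq : (fun y => v (r • y)) =ᶠ[nhds x] (fun y => r ^ ℓ * v y) := by
    filter_upwards [hU.mem_nhds hx] with y hy
    exact hom r hr y hy
  have hL : HasFDerivAt (fun y : Fin d → ℝ => r • y)
      (r • ContinuousLinearMap.id ℝ (Fin d → ℝ)) x :=
    (ContinuousLinearMap.id ℝ (Fin d → ℝ)).hasFDerivAt.const_smul r
  have h1 : HasFDerivAt (fun y : Fin d → ℝ => v (r • y))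
      ((fderiv ℝ v (r • x)).comp (r • ContinuousLinearMap.id ℝ (Fin d → ℝ))) x :=
    ((hD _ hrx).hasFDerivAt).comp x hL
  have h2 : fderiv ℝ (fun y : Fin d → ℝ => r ^ ℓ * v y) x
      = r ^ ℓ • fderiv ℝ v x := by
    simpa [smul_eq_mul] using fderiv_const_mul (hD x hx) (r ^ ℓ)
  have h3 : fderiv ℝ (fun y : Fin d → ℝ => v (r • y)) x
      = fderiv ℝ (fun y : Fin d → ℝ => r ^ ℓ * v y) x := heq.fderiv_eq
  have h4 := congrArg (fun (L : (Fin d → ℝ) →L[ℝ] ℝ) => L (Pi.single j 1))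
    (h1.fderiv.symm.trans (h3.trans h2))
  simp only [ContinuousLinearMap.comp_apply, ContinuousLinearMap.smul_apply,
    ContinuousLinearMap.coe_smul', Pi.smul_apply, ContinuousLinearMap.id_apply,
    smul_eq_mul] at h4
  have h5 : r * pderiv' v j (r • x) = r ^ ℓ * pderiv' v j x := by
    unfold pderiv'
    rw [(fderiv ℝ v (r • x)).map_smul, smul_eq_mul] at h4
    exact h4
  have : pderiv' v j (r • x) = r ^ ℓ / r * pderiv' v j x := by
    field_simp at h5 ⊢
    linarith [h5]
  rw [this]
  congr 1
  rw [Real.rpow_sub hr, Real.rpow_one]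

lemma sum_pairs {d : ℕ} (F : Fin d → Fin d → ℝ) :
    ∑ i, ∑ j ∈ Finset.Ioi i, (F i j + F j i)
      = ∑ i, ∑ j ∈ Finset.univ.erase i, F i j := by
  have hcomm : ∑ i, ∑ j ∈ Finset.Ioi i, F j i = ∑ i, ∑ j ∈ Finset.Iio i, F i j := by
    refine Finset.sum_comm' ?_
    intro a b
    simp [and_comm, Finset.mem_Ioi, Finset.mem_Iio]
  have herase : ∀ i : Fin d, Finset.univ.erase i = Finset.Iio i ∪ Finset.Ioi i := by
    intro i
    ext j
    simp [Finset.mem_Iio, Finset.mem_Ioi, lt_or_lt_iff_ne, ne_comm, eq_comm]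
  simp_rw [Finset.sum_add_distrib]
  rw [hcomm]
  rw [← Finset.sum_add_distrib]
  refine Finset.sum_congr rfl fun i _ => ?_
  rw [herase i, Finset.sum_union ((Finset.disjoint_Ioi_Iio i).symm)]
  ring

lemma pderiv_coord_mul {d : ℕ} (g : (Fin d → ℝ) → ℝ) {x : Fin d → ℝ}
    (hg : DifferentiableAt ℝ g x) (a c : Fin d) :
    pderiv' (fun y => y a * g y) c x
      = (Pi.single c 1 : Fin d → ℝ) a * g x + x a * pderiv' g c x := by
  have ha : DifferentiableAt ℝ (fun y : Fin d → ℝ => y a) x :=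
    (ContinuousLinearMap.proj a : (Fin d → ℝ) →L[ℝ] ℝ).differentiableAt
  have hfa : fderiv ℝ (fun y : Fin d → ℝ => y a) x
      = (ContinuousLinearMap.proj a : (Fin d → ℝ) →L[ℝ] ℝ) :=
    (ContinuousLinearMap.proj a : (Fin d → ℝ) →L[ℝ] ℝ).fderiv
  unfold pderiv'
  rw [fderiv_fun_mul ha hg]
  simp only [ContinuousLinearMap.add_apply, ContinuousLinearMap.smul_apply, hfa,
    ContinuousLinearMap.proj_apply, smul_eq_mul]
  ring

/-- Proposition 1 of the paper: for `v` smooth on `ℝᵈ∖{0}` homogeneous of degree `ℓ`,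
`∑_{i≠j} N_{ij}² v = Δ_K v + (d−1)ℓ v + ((d−1)/d) ℓ² v − (1/d) ∑_{i<j} A_{ij}² v`. -/
theorem casimir_identity (d : ℕ) (hd : 2 ≤ d) (ℓ : ℝ) (v : (Fin d → ℝ) → ℝ)
    (hv : ContDiffOn ℝ (⊤ : ℕ∞) v {x | x ≠ 0})
    (hom : ∀ r : ℝ, 0 < r → ∀ x : Fin d → ℝ, x ≠ 0 → v (r • x) = r ^ ℓ * v x)
    (x : Fin d → ℝ) (hx : x ≠ 0) :
    ∑ i : Fin d, ∑ j ∈ Finset.univ.erase i, Nop i j (Nop i j v) x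
      = (∑ i : Fin d, ∑ j ∈ Finset.Ioi i, Kop i j (Kop i j v) x)
        + ((d : ℝ) - 1) * ℓ * v x
        + (((d : ℝ) - 1) / (d : ℝ)) * ℓ ^ 2 * v x
        - (1 / (d : ℝ)) * ∑ i : Fin d, ∑ j ∈ Finset.Ioi i, Aop i j (Aop i j v) x := by
  have hd0 : (d : ℝ) ≠ 0 := by
    have : (0:ℕ) < d := by omega
    exact_mod_cast this.ne'
  have hU : IsOpen {y : Fin d → ℝ | y ≠ 0} := isOpen_ne
  have hCAt : ∀ y : Fin d → ℝ, y ≠ 0 → ContDiffAt ℝ (⊤ : ℕ∞) v y :=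
    fun y hy => hv.contDiffAt (hU.mem_nhds hy)
  have hD : ∀ y : Fin d → ℝ, y ≠ 0 → DifferentiableAt ℝ v y :=
    fun y hy => (hCAt y hy).differentiableAt (by simp)
  have hD2 : DifferentiableAt ℝ (fderiv ℝ v) x :=
    ((hCAt x hx).fderiv_right (m := 1) (WithTop.coe_le_coe.mpr le_top)).differentiableAt (by simp)
  set w : Fin d → ℝ := fun i => pderiv' v i x with hwdef
  set H : Fin d → Fin d → ℝ := fun i j => pderiv' (fun y => pderiv' v i y) j x with hHdef
  have hwD : ∀ j : Fin d, DifferentiableAt ℝ (fun y => pderiv' v j y) x := by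
    intro j
    have := hD2.clm_apply (differentiableAt_const (Pi.single j (1:ℝ)))
    simpa [pderiv'] using this
  have E1 : ∑ i, x i * w i = ℓ * v x := by
    simp only [hwdef]
    exact euler_sum (hD x hx) (fun r hr => hom r hr x hx)
  have E2 : ∀ i : Fin d, ∑ j, x j * H i j = (ℓ - 1) * w i := by
    intro i
    simp only [hwdef, hHdef]
    exact euler_sum (hwD i) (fun r hr => pderiv_hom hD hom hx i r hr)
  have hprod : ∀ a b c : Fin d, pderiv' (fun y => y a * pderiv' v b y) c x
      = (Pi.single c 1 : Fin d → ℝ) a * w b + x a * H b c := by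
    intro a b c
    simp only [hwdef, hHdef]
    exact pderiv_coord_mul _ (hwD b) a c
  have hmulD : ∀ a b : Fin d, DifferentiableAt ℝ (fun y => y a * pderiv' v b y) x :=
    fun a b =>
      ((ContinuousLinearMap.proj a : (Fin d → ℝ) →L[ℝ] ℝ).differentiableAt).mul (hwD b)
  have hsubmul : ∀ a b a' b' c : Fin d,
      pderiv' (fun y => y a * pderiv' v b y - y a' * pderiv' v b' y) c x
        = (Pi.single c 1 : Fin d → ℝ) a * w b + x a * H b c
          - ((Pi.single c 1 : Fin d → ℝ) a' * w b' + x a' * H b' c) := by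
    intro a b a' b' c
    have hsplit : pderiv' (fun y => y a * pderiv' v b y - y a' * pderiv' v b' y) c x
        = pderiv' (fun y => y a * pderiv' v b y) c x
          - pderiv' (fun y => y a' * pderiv' v b' y) c x := by
      rw [pderiv', fderiv_fun_sub (hmulD a b) (hmulD a' b')]
      simp [pderiv']
    rw [hsplit, hprod, hprod]
  -- values of the operators
  have hN : ∀ i j : Fin d, j ≠ i → Nop i j (Nop i j v) x = x i ^ 2 * H j j := by
    intro i j hji
    show x i * pderiv' (fun y => y i * pderiv' v j y) j x = _
    rw [hprod i j j, Pi.single_eq_of_ne hji.symm]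
    · ring
  have hK : ∀ i j : Fin d, i ≠ j → Kop i j (Kop i j v) x
      = (x i ^ 2 * H j j - x i * (x j * H i j) - x i * w i)
        + (x j ^ 2 * H i i - x j * (x i * H j i) - x j * w j) := by
    intro i j hij
    show x i * pderiv' (fun y => y i * pderiv' v j y - y j * pderiv' v i y) j x
        - x j * pderiv' (fun y => y i * pderiv' v j y - y j * pderiv' v i y) i x = _
    rw [hsubmul i j j i j, hsubmul i j j i i,
      Pi.single_eq_same, Pi.single_eq_same,
      Pi.single_eq_of_ne hij, Pi.single_eq_of_ne hij.symm]
    ring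
  have hA : ∀ i j : Fin d, i ≠ j → Aop i j (Aop i j v) x
      = (x i * w i + x i ^ 2 * H i i - x i * (x j * H i j))
        + (x j * w j + x j ^ 2 * H j j - x j * (x i * H j i)) := by
    intro i j hij
    show x i * pderiv' (fun y => y i * pderiv' v i y - y j * pderiv' v j y) i x
        - x j * pderiv' (fun y => y i * pderiv' v i y - y j * pderiv' v j y) j x = _
    rw [hsubmul i i j j i, hsubmul i i j j j,
      Pi.single_eq_same, Pi.single_eq_same,
      Pi.single_eq_of_ne hij, Pi.single_eq_of_ne hij.symm]
    ring
  -- inner sum evaluation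
  have hin : ∀ (i : Fin d) (c₁ c₂ c₃ : ℝ),
      ∑ j ∈ Finset.univ.erase i, (c₁ * H j j + c₂ * (x j * H i j) + c₃)
        = c₁ * ((∑ j, H j j) - H i i) + c₂ * ((ℓ - 1) * w i - x i * H i i)
          + ((d : ℝ) - 1) * c₃ := by
    intro i c₁ c₂ c₃
    rw [Finset.sum_add_distrib, Finset.sum_add_distrib, ← Finset.mul_sum, ← Finset.mul_sum,
      Finset.sum_const, Finset.sum_erase_eq_sub (Finset.mem_univ i),
      Finset.sum_erase_eq_sub (Finset.mem_univ i), E2 i,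
      Finset.card_erase_of_mem (Finset.mem_univ i), Finset.card_univ, Fintype.card_fin,
      nsmul_eq_mul, Nat.cast_sub (by omega : 1 ≤ d), Nat.cast_one]
  -- the three double sums
  have hNsum : ∑ i : Fin d, ∑ j ∈ Finset.univ.erase i, Nop i j (Nop i j v) x
      = ∑ i, x i ^ 2 * ((∑ j, H j j) - H i i) := by
    refine Finset.sum_congr rfl fun i _ => ?_
    calc ∑ j ∈ Finset.univ.erase i, Nop i j (Nop i j v) x
        = ∑ j ∈ Finset.univ.erase i, (x i ^ 2 * H j j + 0 * (x j * H i j) + 0) :=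
          Finset.sum_congr rfl fun j hj => by
            rw [hN i j (Finset.mem_erase.mp hj).1]; ring
      _ = _ := by rw [hin i (x i ^ 2) 0 0]; ring
  have hKsum : ∑ i : Fin d, ∑ j ∈ Finset.Ioi i, Kop i j (Kop i j v) x
      = (∑ i, x i ^ 2 * ((∑ j, H j j) - H i i)) + (∑ i, x i ^ 2 * H i i)
        - (ℓ - 1) * (ℓ * v x) - ((d : ℝ) - 1) * (ℓ * v x) := by
    calc ∑ i : Fin d, ∑ j ∈ Finset.Ioi i, Kop i j (Kop i j v) x
        = ∑ i, ∑ j ∈ Finset.Ioi i,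
            ((fun i j => x i ^ 2 * H j j - x i * (x j * H i j) - x i * w i) i j
              + (fun i j => x i ^ 2 * H j j - x i * (x j * H i j) - x i * w i) j i) := by
          refine Finset.sum_congr rfl fun i _ => Finset.sum_congr rfl fun j hj => ?_
          rw [hK i j (ne_of_lt (Finset.mem_Ioi.mp hj))]
      _ = ∑ i, ∑ j ∈ Finset.univ.erase i,
            (x i ^ 2 * H j j - x i * (x j * H i j) - x i * w i) := sum_pairs _
      _ = ∑ i, (x i ^ 2 * ((∑ j, H j j) - H i i)
            + (-(x i)) * ((ℓ - 1) * w i - x i * H i i) + ((d : ℝ) - 1) * (-(x i * w i))) := by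
          refine Finset.sum_congr rfl fun i _ => ?_
          calc ∑ j ∈ Finset.univ.erase i, (x i ^ 2 * H j j - x i * (x j * H i j) - x i * w i)
              = ∑ j ∈ Finset.univ.erase i,
                  (x i ^ 2 * H j j + (-(x i)) * (x j * H i j) + (-(x i * w i))) :=
                Finset.sum_congr rfl fun j _ => by ring
            _ = _ := by rw [hin]
      _ = ∑ i, (x i ^ 2 * ((∑ j, H j j) - H i i) + x i ^ 2 * H i i
            - (ℓ - 1) * (x i * w i) - ((d : ℝ) - 1) * (x i * w i)) :=
          Finset.sum_congr rfl fun i _ => by ring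
      _ = _ := by
          rw [Finset.sum_sub_distrib, Finset.sum_sub_distrib, Finset.sum_add_distrib,
            ← Finset.mul_sum, ← Finset.mul_sum, E1]
  have hAsum : ∑ i : Fin d, ∑ j ∈ Finset.Ioi i, Aop i j (Aop i j v) x
      = ((d : ℝ) - 1) * (ℓ * v x) + ((d : ℝ) - 1) * (∑ i, x i ^ 2 * H i i)
        - (ℓ - 1) * (ℓ * v x) + (∑ i, x i ^ 2 * H i i) := by
    calc ∑ i : Fin d, ∑ j ∈ Finset.Ioi i, Aop i j (Aop i j v) x
        = ∑ i, ∑ j ∈ Finset.Ioi i,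
            ((fun i j => x i * w i + x i ^ 2 * H i i - x i * (x j * H i j)) i j
              + (fun i j => x i * w i + x i ^ 2 * H i i - x i * (x j * H i j)) j i) := by
          refine Finset.sum_congr rfl fun i _ => Finset.sum_congr rfl fun j hj => ?_
          rw [hA i j (ne_of_lt (Finset.mem_Ioi.mp hj))]
      _ = ∑ i, ∑ j ∈ Finset.univ.erase i,
            (x i * w i + x i ^ 2 * H i i - x i * (x j * H i j)) := sum_pairs _
      _ = ∑ i, (0 * ((∑ j, H j j) - H i i)
            + (-(x i)) * ((ℓ - 1) * w i - x i * H i i)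
            + ((d : ℝ) - 1) * (x i * w i + x i ^ 2 * H i i)) := by
          refine Finset.sum_congr rfl fun i _ => ?_
          calc ∑ j ∈ Finset.univ.erase i,
                (x i * w i + x i ^ 2 * H i i - x i * (x j * H i j))
              = ∑ j ∈ Finset.univ.erase i,
                  (0 * H j j + (-(x i)) * (x j * H i j)
                    + (x i * w i + x i ^ 2 * H i i)) :=
                Finset.sum_congr rfl fun j _ => by ring
            _ = _ := by rw [hin]
      _ = ∑ i, (((d : ℝ) - 1) * (x i * w i) + ((d : ℝ) - 1) * (x i ^ 2 * H i i)
            - (ℓ - 1) * (x i * w i) + x i ^ 2 * H i i) :=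
          Finset.sum_congr rfl fun i _ => by ring
      _ = _ := by
          rw [Finset.sum_add_distrib, Finset.sum_sub_distrib, Finset.sum_add_distrib,
            ← Finset.mul_sum, ← Finset.mul_sum, ← Finset.mul_sum, E1]
  rw [hNsum, hKsum, hAsum]
  generalize (∑ i, x i ^ 2 * ((∑ j, H j j) - H i i)) = G
  generalize (∑ i, x i ^ 2 * H i i) = S
  field_simp
  ring
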